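/- arXiv:2305.03381 — 5 statements merged into one kernel-verified Lean document; each statement's English description precedes it below -/
import Mathlib

section
/- For every real μ > 0 and every triple (a,b,c) of reals with μ < a < 2μ, 0 < b < μ, 0 < c < μ, and c ≤ a − b < μ, one has f(a,b,c) ≤ 0, where f(a,b,c) := 2(a−c)c/a − μ/2 + (1/a − 1/μ) · (1/(1/(a−b) − 1/μ)) · (μ/2 − 2((a−b)−c)c/(a−b)). -/
/-! Clearing denominators, `f` collapses to `-2b (c - μ/2)² / (a (μ - (a - b)))`; this is
nonpositive because `b ≥ 0`, `a > 0` and `a - b < μ`. -/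

theorem f_closed_form {K : Type*} [Field K] [NeZero (2 : K)] {μ a b : K} (c : K)
    (hμ : μ ≠ 0) (ha : a ≠ 0) (hab : a - b ≠ 0) (hμab : μ - (a - b) ≠ 0) :
    2 * (a - c) * c / a - μ / 2 +
      (1 / a - 1 / μ) * (1 / (1 / (a - b) - 1 / μ)) *
        (μ / 2 - 2 * ((a - b) - c) * c / (a - b)) =
      -2 * b * (c - μ / 2) ^ 2 / (a * (μ - (a - b))) := by
  field_simp
  ring

theorem f_nonpos_general (μ a b c : ℝ) (hμ : 0 < μ)
    (ha₁ : μ < a)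
    (hb₁ : 0 < b)
    (hc₁ : 0 < c)
    (hcab : c ≤ a - b) (habμ : a - b < μ) :
    2 * (a - c) * c / a - μ / 2 +
      (1 / a - 1 / μ) * (1 / (1 / (a - b) - 1 / μ)) *
        (μ / 2 - 2 * ((a - b) - c) * c / (a - b)) ≤ 0 := by
  have ha : 0 < a := hμ.trans ha₁
  have hab : 0 < a - b := hc₁.trans_le hcab
  have hμab : 0 < μ - (a - b) := sub_pos.mpr habμ
  rw [f_closed_form c hμ.ne' ha.ne' hab.ne' hμab.ne']
  apply div_nonpos_of_nonpos_of_nonneg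
  · have : 0 ≤ 2 * b * (c - μ / 2) ^ 2 := by positivity
    linarith
  · positivity

theorem f_nonpos (μ a b c : ℝ) (hμ : 0 < μ)
    (ha₁ : μ < a) (ha₂ : a < 2 * μ)
    (hb₁ : 0 < b) (hb₂ : b < μ)
    (hc₁ : 0 < c) (hc₂ : c < μ)
    (hcab : c ≤ a - b) (habμ : a - b < μ) :
    2 * (a - c) * c / a - μ / 2 +
      (1 / a - 1 / μ) * (1 / (1 / (a - b) - 1 / μ)) *
        (μ / 2 - 2 * ((a - b) - c) * c / (a - b)) ≤ 0 :=
  f_nonpos_general μ a b c hμ ha₁ hb₁ hc₁ hcab habμ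
end

section
/- For every real μ > 0 and every triple (a,b,c) of reals with μ < a < 2μ, 0 < b < μ, 0 < c < μ, and c ≤ a − b < μ, one has g(a,b,c) ≤ 0, where g(a,b,c) := 2(a−c)c/a − μ/2 + (1/a − 1/μ) · (1/(1/(a−b) − 1/μ)) · (μ/2). -/
/-!
Write `d = a - b`. Then `1 / (1 / d - 1 / μ) = d μ / (μ - d)`, and the parabola `c ↦ 2 (a - c) c / a`
is increasing up to its maximum `a / 2` at `c = a / 2`, so on `c ≤ d` it is bounded by its value at
`min d (a / 2)`. If `a / 2 ≤ d`, the bound `a / 2` suffices because `μ ≤ a`. If `d < a / 2`, the value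
of `g` at `c = d` is `-(a - d) (μ - 2 d)² / (2 a (μ - d)) ≤ 0`.
-/

theorem one_div_one_div_sub_one_div {d μ : ℝ} (hd : d ≠ 0) (hμ : μ ≠ 0) :
    1 / (1 / d - 1 / μ) = d * μ / (μ - d) := by
  rw [one_div d, one_div μ, inv_sub_inv hd hμ, one_div_div]

section

variable {μ a c d : ℝ}

theorem two_mul_sub_mul_div_le_half (ha : 0 < a) : 2 * (a - c) * c / a ≤ a / 2 := by
  rw [div_le_div_iff₀ ha two_pos]
  nlinarith [sq_nonneg (a - 2 * c)]

theorem two_mul_sub_mul_div_le_of_le (ha : 0 < a) (hcd : c ≤ d) (hcda : c + d ≤ a) :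
    2 * (a - c) * c / a ≤ 2 * (a - d) * d / a := by
  apply div_le_div_of_nonneg_right _ ha.le
  nlinarith [mul_nonneg (sub_nonneg.2 hcd) (sub_nonneg.2 hcda)]

theorem neg_half_add_correction_le_neg_half (hμa : μ ≤ a) (hd : a / 2 ≤ d) (hdμ : d < μ) :
    -(μ / 2) + (1 / a - 1 / μ) * (d * μ / (μ - d)) * (μ / 2) ≤ -(a / 2) := by
  have ha : 0 < a := by linarith
  have hμ : 0 < μ := by linarith
  have hμd : 0 < μ - d := by linarith
  have key : -(μ / 2) + (1 / a - 1 / μ) * (d * μ / (μ - d)) * (μ / 2) + a / 2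
      = (a - μ) * (a * μ - d * (a + μ)) / (2 * a * (μ - d)) := by
    field_simp
    ring
  have hnum : a * μ ≤ d * (a + μ) := by nlinarith
  have : (a - μ) * (a * μ - d * (a + μ)) / (2 * a * (μ - d)) ≤ 0 :=
    div_nonpos_of_nonpos_of_nonneg
      (mul_nonpos_of_nonneg_of_nonpos (by linarith) (by linarith)) (by positivity)
  linarith

theorem neg_half_add_correction_le (hμ : 0 < μ) (ha : 0 < a) (hda : d ≤ a) (hdμ : d < μ) :
    -(μ / 2) + (1 / a - 1 / μ) * (d * μ / (μ - d)) * (μ / 2) ≤ -(2 * (a - d) * d / a) := by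
  have hμd : 0 < μ - d := by linarith
  have key : -(μ / 2) + (1 / a - 1 / μ) * (d * μ / (μ - d)) * (μ / 2) + 2 * (a - d) * d / a
      = -((a - d) * (μ - 2 * d) ^ 2) / (2 * a * (μ - d)) := by
    field_simp
    ring
  have : -((a - d) * (μ - 2 * d) ^ 2) / (2 * a * (μ - d)) ≤ 0 :=
    div_nonpos_of_nonpos_of_nonneg
      (neg_nonpos.2 (mul_nonneg (by linarith) (sq_nonneg _))) (by positivity)
  linarith

end

theorem g_nonpos_general (μ a b c : ℝ) (hμ : 0 < μ)
    (ha₁ : μ < a)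
    (hb₁ : 0 < b)
    (hc₁ : 0 < c)
    (hcab : c ≤ a - b) (habμ : a - b < μ) :
    2 * (a - c) * c / a - μ / 2 +
      (1 / a - 1 / μ) * (1 / (1 / (a - b) - 1 / μ)) * (μ / 2) ≤ 0 := by
  have ha : 0 < a := hμ.trans ha₁
  have hd : 0 < a - b := hc₁.trans_le hcab
  rw [one_div_one_div_sub_one_div hd.ne' hμ.ne']
  rcases le_or_gt (a / 2) (a - b) with hhalf | hhalf
  · linarith [two_mul_sub_mul_div_le_half (c := c) ha,
      neg_half_add_correction_le_neg_half ha₁.le hhalf habμ]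
  · linarith [two_mul_sub_mul_div_le_of_le ha hcab (by linarith),
      neg_half_add_correction_le hμ ha (sub_le_self a hb₁.le) habμ]

theorem g_nonpos (μ a b c : ℝ) (hμ : 0 < μ)
    (ha₁ : μ < a) (ha₂ : a < 2 * μ)
    (hb₁ : 0 < b) (hb₂ : b < μ)
    (hc₁ : 0 < c) (hc₂ : c < μ)
    (hcab : c ≤ a - b) (habμ : a - b < μ) :
    2 * (a - c) * c / a - μ / 2 +
      (1 / a - 1 / μ) * (1 / (1 / (a - b) - 1 / μ)) * (μ / 2) ≤ 0 :=
  g_nonpos_general μ a b c hμ ha₁ hb₁ hc₁ hcab habμ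
end

section
/- Let β ≥ 1 be a real number. For all real x > 0 and y ≥ 0, the function h(x,y) := (β·x + y + √2·√(β·x·y)) / (x + y) satisfies h(x,y) ≤ β + β/(√(β² + 1) + β − 1). -/
/-!
Write `s = √(β² + 1)`. Since `(s + 1 - β)(s + β - 1) = s² - (β - 1)² = 2β`, the bound equals
`(β + s + 1) / 2`, and AM-GM with the weights `(s + 1 - β) / 2` and `(s + β - 1) / 2`, whose product
is `β / 2`, gives `√2 · √(βxy) ≤ (s + 1 - β) x / 2 + (s + β - 1) y / 2`. Adding `βx + y` turns the
right-hand side into `(β + s + 1)(x + y) / 2`.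
-/

open Real

lemma two_mul_sqrt_mul_le_add {u v : ℝ} (hu : 0 ≤ u) (hv : 0 ≤ v) : 2 * √(u * v) ≤ u + v := by
  rw [sqrt_mul hu, ← mul_assoc]
  simpa only [sq_sqrt hu, sq_sqrt hv] using two_mul_le_add_sq (√u) (√v)

lemma sqrt_sq_add_one_add_one_sub_mul (β : ℝ) :
    (√(β ^ 2 + 1) + 1 - β) * (√(β ^ 2 + 1) + β - 1) = 2 * β := by
  have hs : √(β ^ 2 + 1) ^ 2 = β ^ 2 + 1 := sq_sqrt (by positivity)
  linear_combination hs

lemma one_le_sqrt_sq_add_one (β : ℝ) : 1 ≤ √(β ^ 2 + 1) :=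
  one_le_sqrt.mpr (by nlinarith [sq_nonneg β])

lemma le_sqrt_sq_add_one (β : ℝ) : β ≤ √(β ^ 2 + 1) :=
  le_sqrt_of_sq_le (by linarith)

lemma div_sqrt_sq_add_one_add_sub_one {β : ℝ} (hβ : 0 < β) :
    β / (√(β ^ 2 + 1) + β - 1) = (√(β ^ 2 + 1) + 1 - β) / 2 := by
  have hden : 0 < √(β ^ 2 + 1) + β - 1 := by linarith [one_le_sqrt_sq_add_one β]
  rw [div_eq_div_iff hden.ne' two_ne_zero]
  linarith [sqrt_sq_add_one_add_one_sub_mul β]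

lemma sqrt_two_mul_sqrt_mul_le_of_mul_eq {a b β x y : ℝ} (ha : 0 ≤ a) (hb : 0 ≤ b)
    (hab : a * b = β / 2) (hx : 0 ≤ x) (hy : 0 ≤ y) :
    √2 * √(β * x * y) ≤ a * x + b * y := by
  have hprod : 2 * (β * x * y) = 2 ^ 2 * (a * x * (b * y)) := by
    linear_combination -4 * x * y * hab
  calc √2 * √(β * x * y) = 2 * √(a * x * (b * y)) := by
        rw [← sqrt_mul zero_le_two, hprod, sqrt_mul (by positivity), sqrt_sq zero_le_two]
    _ ≤ a * x + b * y := two_mul_sqrt_mul_le_add (by positivity) (by positivity)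

theorem h_upper_bound (β : ℝ) (hβ : 1 ≤ β) (x y : ℝ) (hx : 0 < x) (hy : 0 ≤ y) :
    (β * x + y + Real.sqrt 2 * Real.sqrt (β * x * y)) / (x + y) ≤
      β + β / (Real.sqrt (β ^ 2 + 1) + β - 1) := by
  rw [div_sqrt_sq_add_one_add_sub_one (by linarith), div_le_iff₀ (by linarith)]
  have hkey : √2 * √(β * x * y) ≤
      (√(β ^ 2 + 1) + 1 - β) / 2 * x + (√(β ^ 2 + 1) + β - 1) / 2 * y :=
    sqrt_two_mul_sqrt_mul_le_of_mul_eq (by linarith [le_sqrt_sq_add_one β])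
      (by linarith [one_le_sqrt_sq_add_one β])
      (by linear_combination sqrt_sq_add_one_add_one_sub_mul β / 4) hx.le hy
  linarith
end

section
/- Let β ≥ 1 be a real number and set a := β/(√(β² + 1) + β − 1). For all real x > 0 and y ≥ 0, the function h(x,y) := (β·x + y + √2·√(β·x·y)) / (x + y) satisfies the identity h(x,y) = β + a − (a/(x+y)) · (√x − (√β/(√2·a))·√y)². -/
/-! Writing `u = √x`, `v = √y`, both sides are quadratic forms in `(u, v)` divided by `x + y`.
Completing the square, they agree as soon as `a` is a root of `2a(a + β - 1) = β`, and
`a = β / (√(β² + 1) + β - 1) = (√(β² + 1) - β + 1) / 2` is its positive root. -/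

open Real

lemma sqrt_sq_add_one_add_sub_one_pos {β : ℝ} (hβ : 0 < β) : 0 < √(β ^ 2 + 1) + β - 1 := by
  have : 1 < √(β ^ 2 + 1) := by
    rw [Real.lt_sqrt zero_le_one]
    nlinarith
  linarith

lemma two_mul_div_mul_div_add_sub_one {β : ℝ} (hβ : 0 < β) :
    2 * (β / (√(β ^ 2 + 1) + β - 1)) * (β / (√(β ^ 2 + 1) + β - 1) + β - 1) = β := by
  have hd := sqrt_sq_add_one_add_sub_one_pos hβ
  have hs : √(β ^ 2 + 1) ^ 2 = β ^ 2 + 1 := Real.sq_sqrt (by positivity)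
  field_simp
  linear_combination (-1) * hs

lemma add_mul_sq_add_sq_sub_mul_sq {β a r s u v : ℝ} (ha : a ≠ 0) (hr : r ^ 2 = 2)
    (hs : s ^ 2 = β) (hroot : 2 * a * (a + β - 1) = β) :
    β * u ^ 2 + v ^ 2 + r * s * u * v =
      (β + a) * (u ^ 2 + v ^ 2) - a * (u - s / (r * a) * v) ^ 2 := by
  have hr0 : r ≠ 0 := by rintro rfl; norm_num at hr
  field_simp
  linear_combination (-r ^ 2 * v ^ 2 / 2) * hroot + (r * u * v * s * a - β * v ^ 2 / 2) * hr
    + v ^ 2 * hs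

theorem h_identity (β : ℝ) (hβ : 1 ≤ β) (x y : ℝ) (hx : 0 < x) (hy : 0 ≤ y) :
    (β * x + y + Real.sqrt 2 * Real.sqrt (β * x * y)) / (x + y) =
      β + β / (Real.sqrt (β ^ 2 + 1) + β - 1) -
        (β / (Real.sqrt (β ^ 2 + 1) + β - 1)) / (x + y) *
          (Real.sqrt x -
            Real.sqrt β / (Real.sqrt 2 * (β / (Real.sqrt (β ^ 2 + 1) + β - 1))) *
              Real.sqrt y) ^ 2 := by
  have hβ0 : 0 < β := by linarith
  have hxy : x + y ≠ 0 := by positivity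
  have ha : β / (√(β ^ 2 + 1) + β - 1) ≠ 0 :=
    (div_pos hβ0 (sqrt_sq_add_one_add_sub_one_pos hβ0)).ne'
  have hcomplete := add_mul_sq_add_sq_sub_mul_sq (u := √x) (v := √y) ha
    (Real.sq_sqrt zero_le_two) (Real.sq_sqrt hβ0.le) (two_mul_div_mul_div_add_sub_one hβ0)
  rw [Real.sq_sqrt hx.le, Real.sq_sqrt hy] at hcomplete
  rw [Real.sqrt_mul (by positivity), Real.sqrt_mul hβ0.le, ← mul_assoc, ← mul_assoc, hcomplete]
  field_simp
end

section
/- Let μ > 0, let 0 < W ≤ μ, and let C ≥ 0, c ≥ 0, D ≥ 0 be real numbers satisfying D < (W − μ/2)·μ·(C + c). Then (1 + W/2)·C + (1 + 1/W)·D ≤ (1 + μ/2)·(C + c) + (1 + 1/μ)·D. -/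
/-
Rearranged, the claim says that the gain (1/W - 1/μ)·D in the delay term is paid for by the
loss (μ - W)/2 · (C + c) in the connection term, plus the extra (1 + μ/2)·c ≥ 0. Multiplying the
Case 2 bound on D by (1/W - 1/μ) = (μ - W)/(Wμ) gives exactly (μ - W)/2 · (C + c) minus the
nonnegative (μ - W)²/(2W) · (C + c).
-/

lemma inv_sub_inv_mul_le_of_lt {μ W S D : ℝ} (hW₀ : 0 < W) (hWμ : W ≤ μ) (hS : 0 ≤ S)
    (hD : D < (W - μ / 2) * μ * S) :
    (1 / W - 1 / μ) * D ≤ (μ - W) / 2 * S := by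
  have hμ : 0 < μ := hW₀.trans_le hWμ
  have hcoef : 0 ≤ (μ - W) / (W * μ) := div_nonneg (sub_nonneg.2 hWμ) (by positivity)
  calc (1 / W - 1 / μ) * D = (μ - W) / (W * μ) * D := by field_simp
    _ ≤ (μ - W) / (W * μ) * ((W - μ / 2) * μ * S) := by gcongr
    _ = (μ - W) / 2 * S - (μ - W) ^ 2 / (2 * W) * S := by field_simp; ring
    _ ≤ (μ - W) / 2 * S := by
      have : 0 ≤ (μ - W) ^ 2 / (2 * W) * S := by positivity
      linarith

theorem case2_estimate_general (μ W C c D : ℝ) (hW₀ : 0 < W) (hWμ : W ≤ μ)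
    (hC : 0 ≤ C) (hc : 0 ≤ c)
    (hcase : D < (W - μ / 2) * μ * (C + c)) :
    (1 + W / 2) * C + (1 + 1 / W) * D ≤ (1 + μ / 2) * (C + c) + (1 + 1 / μ) * D := by
  have key := inv_sub_inv_mul_le_of_lt hW₀ hWμ (add_nonneg hC hc) hcase
  linear_combination key + hc + mul_nonneg hW₀.le hc / 2

theorem case2_estimate (μ W C c D : ℝ) (hμ : 0 < μ) (hW₀ : 0 < W) (hWμ : W ≤ μ)
    (hC : 0 ≤ C) (hc : 0 ≤ c) (hD : 0 ≤ D)
    (hcase : D < (W - μ / 2) * μ * (C + c)) :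
    (1 + W / 2) * C + (1 + 1 / W) * D ≤ (1 + μ / 2) * (C + c) + (1 + 1 / μ) * D :=
  case2_estimate_general μ W C c D hW₀ hWμ hC hc hcase
end
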